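/- Let x_1,...,x_m be sampled i.i.d. from a distribution D over R^d, and let delta in (0,1). Then with probability at least 1-delta over the sample, the probability (over a fresh independent x ~ D) that x is not in the span of x_1,...,x_m is at most d/(delta(m+1)). -/

import Mathlib

/-!
Among `m + 1` i.i.d. samples, the samples lying outside the span of the other `m` are linearly
independent, so at most `d` of these `m + 1` leave-one-out events occur at once. By
exchangeability they all have the same probability, hence each has probability at most
`d / (m + 1)`. For the last sample this event says that a fresh point is not in the span of the
first `m`, so its conditional probability given the sample has expectation at most `d / (m + 1)`,
and Markov's inequality concludes.
-/

open MeasureTheory Set Module Submodule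
open scoped ENNReal Finset

theorem IsSigmaCompact.measurableSet {X : Type*} [TopologicalSpace X] [T2Space X]
    [MeasurableSpace X] [OpensMeasurableSpace X] {s : Set X} (hs : IsSigmaCompact s) :
    MeasurableSet s := by
  obtain ⟨K, hK, rfl⟩ := hs
  exact .iUnion fun n => (hK n).measurableSet

section Markov

variable {Ω : Type*} [MeasurableSpace Ω] {μ : Measure Ω} {f : Ω → ℝ≥0∞}

-- No side condition on `c`: for `c = 0` either `f = 0` a.e. or the bound is `∞`.
theorem measure_lt_le_lintegral_div (hf : AEMeasurable f μ) (c : ℝ≥0∞) :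
    μ {ω | c < f ω} ≤ (∫⁻ ω, f ω ∂μ) / c := by
  rcases eq_or_ne c 0 with rfl | hc0
  · rcases eq_or_ne (∫⁻ ω, f ω ∂μ) 0 with h | h
    · have hf0 : f =ᵐ[μ] 0 := (lintegral_eq_zero_iff' hf).1 h
      refine le_of_eq_of_le (measure_eq_zero_iff_ae_notMem.2 ?_) zero_le
      filter_upwards [hf0] with ω hω
      simp [hω]
    · simp [ENNReal.div_zero h]
  rcases eq_or_ne c ∞ with rfl | hctop
  · simp
  exact (measure_mono fun ω (hω : c < f ω) => hω.le).trans (meas_ge_le_lintegral_div hf hc0 hctop)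

theorem one_sub_div_le_measure_le [IsProbabilityMeasure μ] (hf : AEMeasurable f μ)
    {a : ℝ≥0∞} (hfa : ∫⁻ ω, f ω ∂μ ≤ a) (c : ℝ≥0∞) :
    1 - a / c ≤ μ {ω | f ω ≤ c} := by
  rw [tsub_le_iff_right]
  calc 1 = μ univ := measure_univ.symm
    _ ≤ μ {ω | f ω ≤ c} + μ {ω | f ω ≤ c}ᶜ := measure_univ_le_add_compl _
    _ ≤ μ {ω | f ω ≤ c} + a / c := by
      gcongr
      simpa only [compl_ofPred, not_le] using (measure_lt_le_lintegral_div hf c).trans (by gcongr)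

end Markov

theorem measurePreserving_comp_perm {ι α : Type*} [Fintype ι] [MeasurableSpace α]
    (μ : Measure α) [SigmaFinite μ] (σ : Equiv.Perm ι) :
    MeasurePreserving (fun x : ι → α => x ∘ σ) (Measure.pi fun _ => μ)
      (Measure.pi fun _ => μ) := by
  convert measurePreserving_piCongrLeft (fun _ : ι => μ) σ.symm using 1
  ext x i
  simpa using (MeasurableEquiv.piCongrLeft_apply_apply (β := fun _ : ι => α) σ.symm x (σ i)).symm

theorem sum_measure_le_of_card_le {α ι : Type*} [MeasurableSpace α] {μ : Measure α} [Fintype ι]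
    {s : ι → Set α} (hs : ∀ i, MeasurableSet (s i)) {n : ℕ}
    (h : ∀ x, ∀ t : Finset ι, (∀ i ∈ t, x ∈ s i) → #t ≤ n) :
    ∑ i, μ (s i) ≤ n * μ univ := by
  classical
  calc ∑ i, μ (s i) = ∫⁻ x, ∑ i, (s i).indicator 1 x ∂μ := by
        rw [lintegral_finsetSum _ fun i _ => measurable_one.indicator (hs i)]
        simp only [lintegral_indicator_one (hs _)]
    _ ≤ ∫⁻ _, (n : ℝ≥0∞) ∂μ := lintegral_mono fun x => ?_
    _ = n * μ univ := lintegral_const _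
  have hcard := h x {i | x ∈ s i} fun i hi => (Finset.mem_filter.1 hi).2
  calc ∑ i, (s i).indicator 1 x = (#{i | x ∈ s i} : ℝ≥0∞) := by
        simp only [Set.indicator_apply, Pi.one_apply, Finset.sum_boole]
    _ ≤ n := by exact_mod_cast hcard

section OutsideSpan

variable (K : Type*) {V ι : Type*} [DivisionRing K] [AddCommGroup V] [Module K V]

def outsideSpanOthers (i : ι) : Set (ι → V) := {v | v i ∉ span K (v '' {i}ᶜ)}

variable {K}

theorem comp_mem_outsideSpanOthers_iff {v : ι → V} (σ : Equiv.Perm ι) (i : ι) :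
    v ∘ σ ∈ outsideSpanOthers K i ↔ v ∈ outsideSpanOthers K (σ i) := by
  change v (σ i) ∉ span K ((v ∘ σ) '' {i}ᶜ) ↔ v (σ i) ∉ span K (v '' {σ i}ᶜ)
  rw [image_comp, σ.image_compl, image_singleton]

theorem mem_outsideSpanOthers_iff_succAbove {n : ℕ} {v : Fin (n + 1) → V} (i : Fin (n + 1)) :
    v ∈ outsideSpanOthers K i ↔ v i ∉ span K (range (v ∘ i.succAbove)) := by
  rw [range_comp, Fin.range_succAbove]
  rfl

theorem card_le_finrank_of_forall_mem_outsideSpanOthers [FiniteDimensional K V] {v : ι → V}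
    (t : Finset ι) (ht : ∀ i ∈ t, v ∈ outsideSpanOthers K i) : #t ≤ finrank K V := by
  have hli : LinearIndependent K (fun i : t => v i) := by
    refine linearIndependent_iff_notMem_span.2 fun i hi => ht i i.2 (span_mono ?_ hi)
    rintro _ ⟨j, ⟨-, hj⟩, rfl⟩
    exact ⟨j, fun h => hj (Subtype.ext h), rfl⟩
  simpa using hli.fintype_card_le_finrank

end OutsideSpan

section Sampling

variable {E : Type*} [NormedAddCommGroup E] [NormedSpace ℝ E] [FiniteDimensional ℝ E]
  [MeasurableSpace E] [BorelSpace E] {ι : Type*}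

theorem measurableSet_mem_span_range [Finite ι] :
    MeasurableSet {p : E × (ι → E) | p.1 ∈ span ℝ (range p.2)} := by
  cases nonempty_fintype ι
  have hrange : {p : E × (ι → E) | p.1 ∈ span ℝ (range p.2)}
      = range fun q : (ι → ℝ) × (ι → E) => (∑ i, q.1 i • q.2 i, q.2) := by
    ext ⟨x, v⟩
    simp [mem_span_range_iff_exists_fun, eq_comm]
  rw [hrange]
  exact (isSigmaCompact_range (by fun_prop)).measurableSet

theorem measurableSet_outsideSpanOthers [Finite ι] (i : ι) :
    MeasurableSet (outsideSpanOthers ℝ i : Set (ι → E)) := by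
  have hmeas : Measurable fun v : ι → E => (v i, fun j : ({i}ᶜ : Set ι) => v j) := by fun_prop
  convert hmeas measurableSet_mem_span_range.compl using 1
  ext v
  simp [outsideSpanOthers, image_eq_range]

theorem measurable_measure_notMem_span_range [Finite ι] (D : Measure E) [SFinite D] :
    Measurable fun v : ι → E => D {x | x ∉ span ℝ (range v)} :=
  measurable_measure_prodMk_right measurableSet_mem_span_range.compl

variable [Fintype ι] (D : Measure E)

theorem measure_outsideSpanOthers_eq [SigmaFinite D] (i j : ι) :
    Measure.pi (fun _ => D) (outsideSpanOthers ℝ i)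
      = Measure.pi (fun _ => D) (outsideSpanOthers ℝ j) := by
  classical
  have hpre : (fun v : ι → E => v ∘ Equiv.swap i j) ⁻¹' outsideSpanOthers ℝ i
      = outsideSpanOthers ℝ j := by
    ext v
    simp [comp_mem_outsideSpanOthers_iff]
  rw [← hpre, (measurePreserving_comp_perm D _).measure_preimage
    (measurableSet_outsideSpanOthers i).nullMeasurableSet]

theorem card_mul_measure_outsideSpanOthers_le [IsProbabilityMeasure D] (i : ι) :
    Fintype.card ι * Measure.pi (fun _ => D) (outsideSpanOthers ℝ i) ≤ finrank ℝ E :=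
  calc Fintype.card ι * Measure.pi (fun _ => D) (outsideSpanOthers ℝ i)
      = ∑ j, Measure.pi (fun _ => D) (outsideSpanOthers ℝ j) := by
        rw [Finset.sum_congr rfl fun j _ => measure_outsideSpanOthers_eq D j i, Finset.sum_const,
          Finset.card_univ, nsmul_eq_mul]
    _ ≤ finrank ℝ E * Measure.pi (fun _ => D) univ :=
        sum_measure_le_of_card_le measurableSet_outsideSpanOthers fun _ =>
          card_le_finrank_of_forall_mem_outsideSpanOthers
    _ = finrank ℝ E := by simp

theorem lintegral_measure_notMem_span_range_eq [SigmaFinite D] (m : ℕ) :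
    ∫⁻ v, D {x | x ∉ span ℝ (range v)} ∂(Measure.pi fun _ : Fin m => D)
      = Measure.pi (fun _ => D) (outsideSpanOthers ℝ (Fin.last m)) := by
  have hpre : MeasurableEquiv.piFinSuccAbove (fun _ => E) (Fin.last m) ⁻¹'
      {p | p.1 ∉ span ℝ (range p.2)} = outsideSpanOthers ℝ (Fin.last m) := by
    ext v
    rw [mem_outsideSpanOthers_iff_succAbove]
    exact Iff.rfl
  have hmeas : MeasurableSet {p : E × (Fin m → E) | p.1 ∉ span ℝ (range p.2)} :=
    measurableSet_mem_span_range.compl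
  rw [← hpre, (measurePreserving_piFinSuccAbove (fun _ => D) (Fin.last m)).measure_preimage
    hmeas.nullMeasurableSet, Measure.prod_apply_symm hmeas]
  rfl

theorem lintegral_measure_notMem_span_range_le [IsProbabilityMeasure D] (m : ℕ) :
    ∫⁻ v, D {x | x ∉ span ℝ (range v)} ∂(Measure.pi fun _ : Fin m => D)
      ≤ finrank ℝ E / (m + 1) := by
  rw [lintegral_measure_notMem_span_range_eq, ENNReal.le_div_iff_mul_le (by simp) (by simp),
    mul_comm]
  simpa using card_mul_measure_outsideSpanOthers_le D (Fin.last m)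

end Sampling

/-- Let x_1,...,x_m be sampled i.i.d. from a distribution D over R^d, and δ ∈ (0,1).
Then with probability at least 1-δ over the sample, the probability (over a fresh
independent x ~ D) that x is not in the span of x_1,...,x_m is at most d/(δ(m+1)). -/
theorem prob_fresh_not_in_span_le (d m : ℕ) (D : Measure (Fin d → ℝ))
    [IsProbabilityMeasure D] (δ : ℝ) (hδ : δ ∈ Set.Ioo (0 : ℝ) 1) :
    (Measure.pi fun _ : Fin m => D)
      {xs : Fin m → Fin d → ℝ |
        D {x : Fin d → ℝ | x ∉ Submodule.span ℝ (Set.range xs)}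
          ≤ ENNReal.ofReal (d / (δ * (m + 1)))}
      ≥ 1 - ENNReal.ofReal δ := by
  have hmarkov := one_sub_div_le_measure_le (measurable_measure_notMem_span_range D).aemeasurable
    (lintegral_measure_notMem_span_range_le D m) (ENNReal.ofReal (d / (δ * (m + 1))))
  refine le_trans (tsub_le_tsub_left (ENNReal.div_le_of_le_mul ?_) _) hmarkov
  have hδm : δ * (d / (δ * (m + 1))) = d / (m + 1) := by
    field_simp [hδ.1.ne']
  rw [← ENNReal.ofReal_mul hδ.1.le, hδm, ENNReal.ofReal_div_of_pos (by positivity),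
    Module.finrank_fin_fun]
  norm_cast
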